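/- Let φ_n(x) = T_n(x/2), ψ_m(x) = U_m(x/2), and β the arcsine law on [−2,2]. Then ∫ φ_n·ψ_m dβ = 1 if n ≤ m and n ≡ m (mod 2), and ∫ φ_n·ψ_m dβ = 0 otherwise (i.e. if n > m or n and m have different parities). -/

import Mathlib

/-!
Under `x = 2y` the arcsine law becomes `π⁻¹` times the Chebyshev measure `dy / √(1 - y²)` on
`[-1, 1]`, in which the `T_k` are orthogonal with `‖T_0‖² = π` and `‖T_k‖² = π / 2` for `k > 0`.
By `U_{m+2} = U_m + 2 T_{m+2}`, `U_m = 2 (T_m + T_{m-2} + ⋯)` with the final `T_0`, if any,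
counted once, so pairing with `T_n` gives `π` exactly when `n ≤ m` and `n ≡ m (mod 2)`.
-/

open MeasureTheory Real Polynomial Polynomial.Chebyshev

/-- The arcsine law on `[-2,2]`. -/
noncomputable def arcsineLaw : Measure ℝ :=
  (volume.restrict (Set.Icc (-2 : ℝ) 2)).withDensity
    fun y => ENNReal.ofReal (1 / (π * Real.sqrt (4 - y ^ 2)))

namespace Polynomial.Chebyshev

theorem integral_eval_T_real_mul_eval_U_real_measureT (n m : ℕ) :
    ∫ x, (T ℝ n).eval x * (U ℝ m).eval x ∂measureT =
      if n ≤ m ∧ n % 2 = m % 2 then π else 0 := by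
  induction m using Nat.twoStepInduction with
  | zero =>
    simp only [Nat.cast_zero, U_zero, eval_one, mul_one]
    rcases eq_or_ne n 0 with rfl | hn
    · simpa using integral_eval_T_real_measureT_zero
    · rw [integral_eval_T_real_measureT_of_ne_zero (by exact_mod_cast hn), if_neg (by omega)]
  | one =>
    have hU : U ℝ ((1 : ℕ) : ℤ) = 2 * T ℝ (1 : ℕ) := by simp
    simp only [hU, eval_mul, eval_ofNat, mul_left_comm _ (2 : ℝ), integral_const_mul]
    rcases eq_or_ne n 1 with rfl | hn
    · rw [integral_T_real_mul_self_measureT_of_ne_zero one_ne_zero, if_pos (by omega)]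
      ring
    · rw [integral_eval_T_real_mul_eval_T_real_measureT_of_ne hn, if_neg (by omega), mul_zero]
  | more m ih _ =>
    have hU : U ℝ ((m + 2 : ℕ) : ℤ) = 2 * T ℝ (m + 2 : ℕ) + U ℝ m := by
      push_cast
      exact U_eq_two_mul_T_add_U ℝ m
    simp only [hU, eval_add, eval_mul, eval_ofNat, mul_add, mul_left_comm _ (2 : ℝ)]
    rw [integral_add (integrable_measureT (by fun_prop))
        (integrable_measureT (by fun_prop)), integral_const_mul, ih]
    rcases eq_or_ne n (m + 2) with rfl | hn
    · rw [integral_T_real_mul_self_measureT_of_ne_zero (by omega), if_neg (by omega),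
        if_pos (by omega)]
      ring
    · rw [integral_eval_T_real_mul_eval_T_real_measureT_of_ne hn, mul_zero, zero_add]
      exact if_congr (by omega) rfl rfl

end Polynomial.Chebyshev

theorem Real.sqrt_four_sub_two_mul_sq (y : ℝ) : √(4 - (2 * y) ^ 2) = 2 * √(1 - y ^ 2) := by
  rw [show 4 - (2 * y) ^ 2 = 2 ^ 2 * (1 - y ^ 2) by ring, Real.sqrt_mul (by positivity),
    Real.sqrt_sq zero_le_two]

theorem integral_arcsineLaw (f : ℝ → ℝ) :
    ∫ x, f x ∂arcsineLaw = π⁻¹ * ∫ y, f (2 * y) ∂measureT := by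
  have h_density : ∫ x, f x ∂arcsineLaw = ∫ x in -2..2, 1 / (π * √(4 - x ^ 2)) * f x := by
    rw [arcsineLaw, integral_withDensity_eq_integral_toReal_smul (by fun_prop)
      (ae_of_all _ fun _ => ENNReal.ofReal_lt_top), intervalIntegral.integral_of_le (by norm_num),
      ← integral_Icc_eq_integral_Ioc]
    congr 1 with x
    rw [ENNReal.toReal_ofReal (by positivity), smul_eq_mul]
  have h_scale (y : ℝ) : f (2 * y) * √(1 - y ^ 2)⁻¹ =
      π * (2 * (1 / (π * √(4 - (2 * y) ^ 2)) * f (2 * y))) := by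
    rw [Real.sqrt_inv, sqrt_four_sub_two_mul_sq, one_div, mul_inv, mul_inv]
    field_simp
  rw [h_density, integral_measureT]
  simp_rw [h_scale]
  rw [intervalIntegral.integral_const_mul, intervalIntegral.integral_const_mul,
    inv_mul_cancel_left₀ pi_ne_zero, ← smul_eq_mul,
    intervalIntegral.smul_integral_comp_mul_left (fun x => 1 / (π * √(4 - x ^ 2)) * f x)]
  norm_num

/-- `∫ φ_n ψ_m dβ = 1` if `n ≤ m` and `n ≡ m (mod 2)`, and `0` otherwise, where
`φ_n(x) = T_n(x/2)`, `ψ_m(x) = U_m(x/2)` and `β` is the arcsine law on `[-2,2]`. -/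
theorem chebyshev_T_U_arcsine_pairing (n m : ℕ) :
    ∫ x, (T ℝ n).eval (x / 2) * (U ℝ m).eval (x / 2) ∂arcsineLaw =
      if n ≤ m ∧ n % 2 = m % 2 then 1 else 0 := by
  simp only [integral_arcsineLaw, mul_div_cancel_left₀ _ (two_ne_zero (α := ℝ)),
    integral_eval_T_real_mul_eval_U_real_measureT]
  split_ifs
  · exact inv_mul_cancel₀ pi_ne_zero
  · exact mul_zero _
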